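/- For each n ∈ ℕ there is a unique real number γ_n > 1 satisfying γ_n^{−L_n} + γ_n^{−2L_{n−1}} = 1; it satisfies γ_n^{m} = γ_n + 1 where m = max(L_n, 2L_{n−1}); γ_0 = (1+√5)/2 is the golden ratio; and the sequence (γ_n)_{n≥0} is strictly decreasing and converges to 1. -/
import Mathlib

def phiWord (k : ℕ) : List ℕ := 1 :: List.replicate (2 * k) 0
def phiList (w : List ℕ) : List ℕ := (w.map phiWord).flatten
def uWord (n : ℕ) : List ℕ := phiList^[n] [1]
def Lw (n : ℕ) : ℕ := (uWord n).length
def Lprev (n : ℕ) : ℕ := match n with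
  | 0 => 1
  | m + 1 => Lw m

/-- `γ` is the number `γ_n`: real, `> 1`, with `γ^{-L_n} + γ^{-2L_{n-1}} = 1`. -/
def IsGamma (n : ℕ) (γ : ℝ) : Prop :=
  1 < γ ∧ γ ^ (-(Lw n : ℤ)) + γ ^ (-(2 * Lprev n : ℤ)) = 1

lemma phiList_cons (a : ℕ) (w : List ℕ) : phiList (a :: w) = phiWord a ++ phiList w := by
  simp [phiList]

lemma length_phiList (w : List ℕ) : (phiList w).length = w.length + 2 * w.sum := by
  induction w with
  | nil => simp [phiList]
  | cons a w ih => simp [phiList_cons, phiWord, ih]; ring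

lemma sum_phiList (w : List ℕ) : (phiList w).sum = w.length := by
  induction w with
  | nil => simp [phiList]
  | cons a w ih => simp [phiList_cons, phiWord, ih]; ring

lemma uWord_succ (n : ℕ) : uWord (n + 1) = phiList (uWord n) := by
  simp [uWord, Function.iterate_succ_apply']

lemma sum_uWord (n : ℕ) : (uWord n).sum = Lprev n := by
  cases n with
  | zero => simp [uWord, Lprev]
  | succ m => rw [uWord_succ, sum_phiList]; rfl

lemma Lw_succ (n : ℕ) : Lw (n + 1) = Lw n + 2 * Lprev n := by
  rw [Lw, uWord_succ, length_phiList, sum_uWord]; rfl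

lemma Lw_zero : Lw 0 = 1 := rfl

lemma Lw_basic : ∀ n, (1 ≤ Lw n ∧ 1 ≤ Lprev n) ∧
    (Lw n + 1 = 2 * Lprev n ∨ 2 * Lprev n + 1 = Lw n) := by
  intro n
  induction n with
  | zero => simp [Lw_zero, Lprev]
  | succ m ih =>
    have h1 := Lw_succ m
    have h2 : Lprev (m + 1) = Lw m := rfl
    refine ⟨⟨?_, ?_⟩, ?_⟩ <;> omega

noncomputable section

lemma exists_root (m : ℕ) (hm : 2 ≤ m) : ∃ γ : ℝ, 1 < γ ∧ γ ^ m = γ + 1 := by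
  have hcont : ContinuousOn (fun x : ℝ => x ^ m - x) (Set.Icc 1 2) :=
    (continuous_pow m).sub continuous_id |>.continuousOn
  have h2 : (4 : ℝ) ≤ 2 ^ m := by
    calc (4:ℝ) = 2 ^ 2 := by norm_num
    _ ≤ 2 ^ m := pow_le_pow_right₀ (by norm_num) hm
  have hmem : (1 : ℝ) ∈ Set.Ioo ((1:ℝ) ^ m - 1) ((2:ℝ) ^ m - 2) := by
    constructor
    · norm_num
    · norm_num; linarith
  obtain ⟨x, hx, hfx⟩ := intermediate_value_Ioo (by norm_num : (1:ℝ) ≤ 2) hcont hmem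
  exact ⟨x, hx.1, by simp at hfx; linarith⟩

lemma root_unique {m : ℕ} (hm : 2 ≤ m) {a b : ℝ} (ha : 1 < a) (hb : 1 < b)
    (ham : a ^ m = a + 1) (hbm : b ^ m = b + 1) : a = b := by
  have key : ∀ x y : ℝ, 1 < x → 1 < y → x ^ m = x + 1 → y ^ m = y + 1 → x < y → False := by
    intro x y hx hy hxm hym hxy
    have h1 : x ^ 1 ≤ x ^ (m - 1) := pow_le_pow_right₀ (le_of_lt hx) (by omega)
    have h2 : x ^ (m - 1) ≤ y ^ (m - 1) := pow_le_pow_left₀ (by linarith) (le_of_lt hxy) _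
    have hx' : x ^ (m - 1) * x = x ^ m := by rw [← pow_succ]; congr 1; omega
    have hy' : y ^ (m - 1) * y = y ^ m := by rw [← pow_succ]; congr 1; omega
    have hxp : (0:ℝ) < x ^ (m-1) := by positivity
    nlinarith [mul_le_mul_of_nonneg_right h2 (by linarith : (0:ℝ) ≤ y)]
  rcases lt_trichotomy a b with h | h | h
  · exact absurd (key a b ha hb ham hbm h) (by simp)
  · exact h
  · exact absurd (key b a hb ha hbm ham h) (by simp)

lemma root_lt {m m' : ℕ} (hm : 2 ≤ m) (hmm : m < m') {a b : ℝ} (ha : 1 < a) (hb : 1 < b)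
    (ham : a ^ m = a + 1) (hbm : b ^ m' = b + 1) : b < a := by
  by_contra h
  push_neg at h  -- a ≤ b
  have h1 : b ^ (m + 1) ≤ b ^ m' := pow_le_pow_right₀ (le_of_lt hb) (by omega)
  have h2 : a ^ m ≤ b ^ m := pow_le_pow_left₀ (by linarith) h m
  have h3 : b ^ (m + 1) = b ^ m * b := pow_succ b m
  nlinarith [mul_le_mul_of_nonneg_right h2 (by linarith : (0:ℝ) ≤ b)]

lemma golden_props : 1 < (1 + Real.sqrt 5) / 2 ∧ ((1 + Real.sqrt 5) / 2) ^ 2 = (1 + Real.sqrt 5) / 2 + 1 := by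
  have h5 : Real.sqrt 5 ^ 2 = 5 := Real.sq_sqrt (by norm_num)
  have h1 : 1 < Real.sqrt 5 := by
    nlinarith [Real.sqrt_nonneg 5]
  constructor
  · linarith
  · nlinarith

end

lemma zpow_eq (γ : ℝ) (hγ : 0 < γ) (b : ℕ) :
    γ ^ (-((b + 1 : ℕ) : ℤ)) + γ ^ (-(b : ℤ)) = 1 ↔ γ ^ (b + 1) = γ + 1 := by
  have h0 : γ ≠ 0 := ne_of_gt hγ
  have hb : γ ^ b ≠ 0 := pow_ne_zero _ h0
  have hb1 : γ ^ (b + 1) ≠ 0 := pow_ne_zero _ h0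
  rw [zpow_neg, zpow_neg, zpow_natCast, zpow_natCast]
  rw [inv_add_inv hb1 hb, div_eq_one_iff_eq (by positivity)]
  rw [pow_succ]
  constructor
  · intro h
    have h2 : γ ^ b * (γ + 1) = γ ^ b * (γ ^ b * γ) := by linear_combination h
    exact (mul_left_cancel₀ hb h2).symm
  · intro h
    linear_combination (-(γ ^ b)) * h

lemma isGamma_iff (n : ℕ) (γ : ℝ) (hγ : 1 < γ) :
    (γ ^ (-(Lw n : ℤ)) + γ ^ (-(2 * Lprev n : ℤ)) = 1) ↔
      γ ^ (max (Lw n) (2 * Lprev n)) = γ + 1 := by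
  have h0 : (0:ℝ) < γ := lt_trans one_pos hγ
  rcases (Lw_basic n).2 with h | h
  · have e1 : (-(2 * Lprev n : ℤ)) = (-((Lw n + 1 : ℕ) : ℤ)) := by push_cast; omega
    have e2 : max (Lw n) (2 * Lprev n) = Lw n + 1 := by omega
    rw [e1, e2, add_comm (γ ^ (-(Lw n : ℤ)))]
    exact zpow_eq γ h0 (Lw n)
  · have e1 : (-(Lw n : ℤ)) = (-((2 * Lprev n + 1 : ℕ) : ℤ)) := by push_cast; omega
    have e2 : (-(2 * Lprev n : ℤ)) = (-(((2 * Lprev n : ℕ)) : ℤ)) := by push_cast; ring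
    have e3 : max (Lw n) (2 * Lprev n) = 2 * Lprev n + 1 := by omega
    rw [e1, e2, e3]
    exact zpow_eq γ h0 (2 * Lprev n)

lemma Mm_two (n : ℕ) : 2 ≤ max (Lw n) (2 * Lprev n) := by
  have := Lw_basic n; omega

lemma Mm_succ_gt (n : ℕ) :
    max (Lw n) (2 * Lprev n) < max (Lw (n + 1)) (2 * Lprev (n + 1)) := by
  have h1 := Lw_succ n
  have h2 := Lw_basic n
  have h3 : Lprev (n + 1) = Lw n := rfl
  omega

lemma Mm_ge (n : ℕ) : n + 2 ≤ max (Lw n) (2 * Lprev n) := by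
  induction n with
  | zero => simp [Lw_zero, Lprev]
  | succ m ih => have := Mm_succ_gt m; omega


/-- for each `n` there is a unique real `γ_n > 1` with
`γ_n^{-L_n} + γ_n^{-2L_{n-1}} = 1`; it satisfies `γ_n^m = γ_n + 1` for
`m = max (L_n) (2L_{n-1})`; `γ_0` is the golden ratio; and `(γ_n)` is strictly
decreasing with limit 1. -/
theorem gamma_exists_unique_props :
    (∀ n : ℕ, ∃! γ : ℝ, IsGamma n γ) ∧
    ∀ g : ℕ → ℝ, (∀ n : ℕ, IsGamma n (g n)) →
      (∀ n : ℕ, g n ^ max (Lw n) (2 * Lprev n) = g n + 1) ∧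
      g 0 = (1 + Real.sqrt 5) / 2 ∧
      StrictAnti g ∧
      Filter.Tendsto g Filter.atTop (nhds 1) := by
  constructor
  · intro n
    obtain ⟨γ, hγ1, hγm⟩ := exists_root _ (Mm_two n)
    refine ⟨γ, ⟨hγ1, (isGamma_iff n γ hγ1).2 hγm⟩, ?_⟩
    rintro y ⟨hy1, hy2⟩
    exact root_unique (Mm_two n) hy1 hγ1 ((isGamma_iff n y hy1).1 hy2) hγm
  · intro g hg
    have hpow : ∀ n, g n ^ max (Lw n) (2 * Lprev n) = g n + 1 :=
      fun n => (isGamma_iff n (g n) (hg n).1).1 (hg n).2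
    refine ⟨hpow, ?_, ?_, ?_⟩
    · have hM0 : max (Lw 0) (2 * Lprev 0) = 2 := rfl
      obtain ⟨hg1, hg2⟩ := golden_props
      refine root_unique (le_refl 2) (hg 0).1 hg1 ?_ hg2
      rw [← hM0]; exact hpow 0
    · apply strictAnti_nat_of_succ_lt
      intro n
      exact root_lt (Mm_two n) (Mm_succ_gt n) (hg n).1 (hg (n+1)).1 (hpow n) (hpow (n+1))
    · have lower : ∀ n : ℕ, (1:ℝ) ≤ g n := fun n => le_of_lt (hg n).1
      have upper : ∀ n : ℕ, g n ≤ 1 + 1 / ((n:ℝ) + 1) := by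
        intro n
        have hε : 0 < g n - 1 := by linarith [(hg n).1]
        have hbern := one_add_mul_le_pow (by linarith : (-2:ℝ) ≤ g n - 1)
          (max (Lw n) (2 * Lprev n))
        rw [show (1 + (g n - 1)) = g n by ring, hpow n] at hbern
        have hM : ((n:ℝ) + 2) ≤ ((max (Lw n) (2 * Lprev n) : ℕ) : ℝ) := by
          exact_mod_cast Mm_ge n
        have hn : (0:ℝ) < (n:ℝ) + 1 := by positivity
        have h1 : ((n:ℝ) + 1) * (g n - 1) ≤ 1 := by nlinarith
        have h2 : g n - 1 ≤ 1 / ((n:ℝ) + 1) := by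
          rw [le_div_iff₀ hn]; linarith
        linarith
      have htop : Filter.Tendsto (fun n : ℕ => 1 + 1 / ((n:ℝ) + 1))
          Filter.atTop (nhds 1) := by
        have h := Filter.Tendsto.const_add (1:ℝ) tendsto_one_div_add_atTop_nhds_zero_nat
        simpa using h
      exact tendsto_of_tendsto_of_tendsto_of_le_of_le tendsto_const_nhds htop lower upper
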